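/- Let W̄₁ : X → Y and W̄₂ : X → Z be two binary-input discrete memoryless channels such that W̄₂ ⪯ W̄₁. Consider the polar transform X = U·G_N over 𝔽₂ with uniformly distributed input U, and for each i ∈ {1,…,N} the bit-channels W̄_{1,N}^{(i)} : U_i → (U_{[i−1]}, Y_{[N]}) and W̄_{2,N}^{(i)} : U_i → (U_{[i−1]}, Z_{[N]}). Then W̄_{2,N}^{(i)} ⪯ W̄_{1,N}^{(i)} for all i ∈ {1,…,N}. -/
import Mathlib


open scoped BigOperators Classical
open Filter Topology

noncomputable section

namespace PolarWiretap

variable {Ω α γ 𝒱 : Type*}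

/-- Probability mass assigned by the weight function `p` to the value `a`
of the random variable `X` (the distribution of `X`). -/
def dist [Fintype Ω] (p : Ω → ℝ) (X : Ω → α) (a : α) : ℝ :=
  ∑ ω, if X ω = a then p ω else 0

/-- Probability of the event `E` under the weight function `p`. -/
def pr [Fintype Ω] (p : Ω → ℝ) (E : Ω → Prop) : ℝ :=
  ∑ ω, if E ω then p ω else 0

/-- Shannon entropy (in bits) of the random variable `X` under `p`. -/
def H [Fintype Ω] [Fintype α] (p : Ω → ℝ) (X : Ω → α) : ℝ :=
  ∑ a, -(dist p X a * Real.logb 2 (dist p X a))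

/-- Conditional Shannon entropy `H(X|Y) = H(X,Y) − H(Y)` (in bits). -/
def condH [Fintype Ω] [Fintype α] [Fintype γ] (p : Ω → ℝ) (X : Ω → α) (Y : Ω → γ) : ℝ :=
  H p (fun ω => (X ω, Y ω)) - H p Y

/-- Mutual information `I(X;Y) = H(X) + H(Y) − H(X,Y)` (in bits). -/
def MI [Fintype Ω] [Fintype α] [Fintype γ] (p : Ω → ℝ) (X : Ω → α) (Y : Ω → γ) : ℝ :=
  H p X + H p Y - H p (fun ω => (X ω, Y ω))

/-- Bhattacharyya parameter
`Z_B(T|V) = 2 ∑_v √(P_{T,V}(0,v) · P_{T,V}(1,v))` of a binary random variable `T`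
given the side information `V`. -/
def ZB [Fintype Ω] [Fintype 𝒱] (p : Ω → ℝ) (T : Ω → ZMod 2) (V : Ω → 𝒱) : ℝ :=
  2 * ∑ v, Real.sqrt (dist p (fun ω => (T ω, V ω)) (0, v) *
      dist p (fun ω => (T ω, V ω)) (1, v))

/-- `p` is a probability mass function on the finite type `Ω`. -/
def IsPMF [Fintype Ω] (p : Ω → ℝ) : Prop := (∀ ω, 0 ≤ p ω) ∧ ∑ ω, p ω = 1

/-- `W` is a (discrete memoryless) channel: a stochastic matrix. -/
def IsChannel {𝒳 𝒴 : Type*} [Fintype 𝒴] (W : 𝒳 → 𝒴 → ℝ) : Prop :=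
  (∀ x y, 0 ≤ W x y) ∧ ∀ x, ∑ y, W x y = 1

/-- `W₂` is degraded with respect to `W₁` (`W₂ ⪯ W₁`): there is a channel `W̃`
with `W₂(z|x) = ∑_y W₁(y|x)·W̃(z|y)`. -/
def Degraded {𝒳 𝒴 𝒵 : Type*} [Fintype 𝒴] [Fintype 𝒵]
    (W₂ : 𝒳 → 𝒵 → ℝ) (W₁ : 𝒳 → 𝒴 → ℝ) : Prop :=
  ∃ Wt : 𝒴 → 𝒵 → ℝ, IsChannel Wt ∧ ∀ x z, W₂ x z = ∑ y, W₁ x y * Wt y z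

/-- The binary entropy function `h₂(x) = −x log₂ x − (1−x) log₂ (1−x)`. -/
def h2 (x : ℝ) : ℝ := -(x * Real.logb 2 x) - (1 - x) * Real.logb 2 (1 - x)

/-- The single-letter joint distribution of an input `X ~ P_X` and the output of
the channel `W` fed with `X`: `P(x,y) = P_X(x)·W(y|x)`. -/
def slP {𝒳 𝒴 : Type*} (PX : 𝒳 → ℝ) (W : 𝒳 → 𝒴 → ℝ) : 𝒳 × 𝒴 → ℝ :=
  fun a => PX a.1 * W a.1 a.2


/-- Entry `(i,j)` of the polar generator matrix `G_N = B_N · G^{⊗n}` over `𝔽₂`,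
where `G = [[1,0],[1,1]]`, `G^{⊗n}` is the `n`-th Kronecker power and `B_N` the
bit-reversal permutation (`N = 2^n`):  the entry equals `1` iff every bit of `j`
is dominated by the corresponding (bit-reversed) bit of `i`. -/
def GN (n : ℕ) (i j : Fin (2 ^ n)) : ZMod 2 :=
  if ∀ k < n, Nat.testBit j.val k → Nat.testBit i.val (n - 1 - k) then 1 else 0

/-- The polar transform `x = u · G_N` over `𝔽₂`. -/
def polarEnc (n : ℕ) (u : Fin (2 ^ n) → ZMod 2) (j : Fin (2 ^ n)) : ZMod 2 :=
  ∑ i, u i * GN n i j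

/-- The `i`-th polarized bit-channel `W̄_N^{(i)} : U_i → (U_{[i−1]}, Y_{[N]})` of
a binary-input channel `W`, with uniformly distributed input `U`:
`W̄_N^{(i)}(u_{[i−1]}, y | u_i) = P_{U_{[i−1]}, Y | U_i}(u_{[i−1]}, y | u_i)
  = 2^{−(N−1)} ∑_{u : u_i, u_{[i−1]} fixed} ∏_j W(y_j | (u·G_N)_j)`. -/
def bitCh {𝒴 : Type*} [Fintype 𝒴] (W : ZMod 2 → 𝒴 → ℝ) (n : ℕ) (i : Fin (2 ^ n))
    (ui : ZMod 2) (out : ({j : Fin (2 ^ n) // j < i} → ZMod 2) × (Fin (2 ^ n) → 𝒴)) : ℝ :=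
  ((2 : ℝ) ^ (2 ^ n - 1 : ℕ))⁻¹ *
    ∑ u : Fin (2 ^ n) → ZMod 2,
      if u i = ui ∧ (∀ j : {j : Fin (2 ^ n) // j < i}, u j.1 = out.1 j)
      then ∏ j, W (polarEnc n u j) (out.2 j) else 0

/-- **(Lemma 2) Degradation is inherited by the polarized bit-channels.**
Let `W̄₁ : X → Y` and `W̄₂ : X → Z` be binary-input DMCs with `W̄₂ ⪯ W̄₁`.
Then for every `i ∈ {1,…,N}` (with `N = 2^n`), the bit-channel
`W̄_{2,N}^{(i)}` is degraded with respect to `W̄_{1,N}^{(i)}`. -/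
theorem bit_channel_degraded {𝒴 𝒵 : Type*} [Fintype 𝒴] [Fintype 𝒵]
    (W₁ : ZMod 2 → 𝒴 → ℝ) (W₂ : ZMod 2 → 𝒵 → ℝ)
    (hW₁ : IsChannel W₁) (hW₂ : IsChannel W₂) (hdeg : Degraded W₂ W₁)
    (n : ℕ) (i : Fin (2 ^ n)) :
    Degraded (bitCh W₂ n i) (bitCh W₁ n i) := by
  obtain ⟨Wt, ⟨hWt0, hWt1⟩, hWeq⟩ := hdeg
  refine ⟨fun oy oz => (if oz.1 = oy.1 then (1:ℝ) else 0) * ∏ j, Wt (oy.2 j) (oz.2 j),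
    ⟨?_, ?_⟩, ?_⟩
  · intro oy oz
    refine mul_nonneg ?_ (Finset.prod_nonneg fun j _ => hWt0 _ _)
    split <;> norm_num
  · intro oy
    rw [Fintype.sum_prod_type]
    have hz : ∀ v' : {j : Fin (2 ^ n) // j < i} → ZMod 2,
        (∑ z : Fin (2 ^ n) → 𝒵, (if v' = oy.1 then (1:ℝ) else 0) *
          ∏ j, Wt (oy.2 j) (z j)) = if v' = oy.1 then 1 else 0 := by
      intro v'
      rw [← Finset.mul_sum, ← Fintype.piFinset_univ, ← Finset.prod_univ_sum]
      simp [hWt1]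
    simp only [hz, Finset.sum_ite_eq', Finset.mem_univ, if_true]
  · intro ui oz
    obtain ⟨v, z⟩ := oz
    have key : ∀ u : Fin (2 ^ n) → ZMod 2,
        (∏ j, W₂ (polarEnc n u j) (z j)) =
        ∑ Y : Fin (2 ^ n) → 𝒴, ∏ j, W₁ (polarEnc n u j) (Y j) * Wt (Y j) (z j) := by
      intro u
      have h1 : (∏ j, ∑ y : 𝒴, W₁ (polarEnc n u j) y * Wt y (z j)) =
          ∑ Y ∈ Fintype.piFinset (fun _ => (Finset.univ : Finset 𝒴)),
            ∏ j, W₁ (polarEnc n u j) (Y j) * Wt (Y j) (z j) :=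
        Finset.prod_univ_sum _ _
      rw [Fintype.piFinset_univ] at h1
      rw [← h1]
      exact Finset.prod_congr rfl fun j _ => hWeq _ _
    rw [Fintype.sum_prod_type, Finset.sum_eq_single v]
    · simp only [bitCh]
      have L : ∀ u : Fin (2 ^ n) → ZMod 2,
          (if u i = ui ∧ (∀ j : {j : Fin (2 ^ n) // j < i}, u j.1 = v j)
           then ∏ j, W₂ (polarEnc n u j) (z j) else 0)
          = ∑ Y : Fin (2 ^ n) → 𝒴,
              if u i = ui ∧ (∀ j : {j : Fin (2 ^ n) // j < i}, u j.1 = v j)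
              then ∏ j, W₁ (polarEnc n u j) (Y j) * Wt (Y j) (z j) else 0 := by
        intro u
        by_cases h : u i = ui ∧ ∀ j : {j : Fin (2 ^ n) // j < i}, u j.1 = v j
        · rw [if_pos h, key u]
          exact Finset.sum_congr rfl fun Y _ => (if_pos h).symm
        · rw [if_neg h]
          symm
          exact (Finset.sum_congr rfl fun Y _ => (if_neg h)).trans Finset.sum_const_zero
      simp only [L, eq_self_iff_true, if_true, one_mul]
      rw [Finset.sum_comm, Finset.mul_sum]
      refine Finset.sum_congr rfl fun Y _ => ?_
      rw [mul_assoc]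
      congr 1
      rw [Finset.sum_mul]
      refine Finset.sum_congr rfl fun u _ => ?_
      rw [ite_mul, zero_mul, Finset.prod_mul_distrib]
    · intro b _ hb
      simp [Ne.symm hb]
    · intro h
      exact absurd (Finset.mem_univ v) h

end PolarWiretap

end
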